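/- arXiv:1506.03574 — 5 statements merged into one kernel-verified Lean document; each statement's English description precedes it below -/
import Mathlib

section
/- The operator D maps ℂ[z] into ℂ[z]. Its kernel in ℂ[z] is finite dimensional and contained in ℂ[z]_{<M}, the quotient ℂ[z]/D(ℂ[z]) is finite dimensional, and dim_ℂ(ℂ[z]/D(ℂ[z])) − dim_ℂ(ker D ∩ ℂ[z]) = δ − μ; in other words, the index of the linear map D : ℂ[z] → ℂ[z] equals μ − δ. -/
/-!
With `N = M + δ - μ`, the operator `D` maps `ℂ[z]_{<M}` into `ℂ[z]_{<N}`, and for `p` of degree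
`d ≥ M` the coefficient of `z ^ (d + δ - μ)` in `D p` is `lc(p) · R(d) ≠ 0`. Hence
`D⁻¹(ℂ[z]_{<N}) = ℂ[z]_{<M}` and `D(ℂ[z]) + ℂ[z]_{<N} = ℂ[z]`. For any linear map `f` and
subspace `W` with `range f + W` the whole space, `f` has the same kernel and cokernel as its
restriction `f⁻¹(W) → W`; between finite-dimensional spaces that index is
`dim f⁻¹(W) - dim W = M - N = μ - δ`.
-/

open Complex Polynomial Finset

/-- The differential operator `D f = ∑_{j=0}^{μ} P_{μ-j} · f^{(j)}`. -/
noncomputable def Dop (μ : ℕ) (P : ℕ → Polynomial ℂ) (f : ℂ → ℂ) : ℂ → ℂ :=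
  fun z => ∑ j ∈ Finset.range (μ + 1), (P (μ - j)).eval z * iteratedDeriv j f z

/-- The polynomial `R(Y) = ∑_{j=0}^{μ} a_{μ-j} · Y(Y-1)⋯(Y-j+1)`, where `a_i` is the
coefficient of `z^{δ-i}` in `P_i`. -/
noncomputable def Rpoly (μ δ : ℕ) (P : ℕ → Polynomial ℂ) : Polynomial ℂ :=
  ∑ j ∈ Finset.range (μ + 1),
    Polynomial.C ((P (μ - j)).coeff (δ - (μ - j))) *
      ∏ l ∈ Finset.range j, (Polynomial.X - Polynomial.C (l : ℂ))

/-- The set of finite singularities of `D`: the roots of `P₀`. -/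
def Sing (P0 : Polynomial ℂ) : Set ℂ := {ρ : ℂ | P0.eval ρ = 0}

/-- The cut plane `Ω_θ`: the plane minus the closed half-lines of direction `π - θ`
starting at the points of `S`. -/
def cutPlane (S : Set ℂ) (θ : ℝ) : Set ℂ :=
  {z : ℂ | ∀ ρ ∈ S, ∀ t : ℝ, 0 ≤ t →
    z ≠ ρ + (t : ℂ) * Complex.exp (Complex.I * ((Real.pi - θ : ℝ) : ℂ))}

/-- The cut disk `D_ρ(ε)` at `ρ`. -/
def cutDisk (ρ : ℂ) (θ : ℝ) (ε : ℝ) : Set ℂ :=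
  {z : ℂ | 0 < ‖z - ρ‖ ∧ ‖z - ρ‖ < ε ∧
    ∀ t : ℝ, 0 ≤ t → z - ρ ≠ (t : ℂ) * Complex.exp (Complex.I * ((Real.pi - θ : ℝ) : ℂ))}

/-- `g`, holomorphic on the cut disk `D_ρ(ε)`, extends holomorphically at `ρ`. -/
def ExtendsHolAt (g : ℂ → ℂ) (ρ : ℂ) (θ : ℝ) (ε : ℝ) : Prop :=
  ∃ ε' : ℝ, 0 < ε' ∧ ε' ≤ ε ∧ ∃ h : ℂ → ℂ,
    DifferentiableOn ℂ h (Metric.ball ρ ε') ∧ ∀ z ∈ cutDisk ρ θ ε', g z = h z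

/-- `θ` is an admissible direction for the singularity set `S`:
`ρ - ρ' ∉ ℝ · e^{-iθ}` for all distinct `ρ, ρ' ∈ S`. -/
def GoodDirection (S : Set ℂ) (θ : ℝ) : Prop :=
  ∀ ρ ∈ S, ∀ ρ' ∈ S, ρ ≠ ρ' → ∀ t : ℝ,
    ρ - ρ' ≠ (t : ℂ) * Complex.exp (-Complex.I * (θ : ℂ))
/-- The operator `D` acting on polynomials, as a linear map `ℂ[z] → ℂ[z]`. -/
noncomputable def DLin (μ : ℕ) (P : ℕ → Polynomial ℂ) :
    Polynomial ℂ →ₗ[ℂ] Polynomial ℂ :=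
  ∑ j ∈ Finset.range (μ + 1),
    LinearMap.comp (LinearMap.mulLeft ℂ (P (μ - j)))
      ((Polynomial.derivative : Module.End ℂ (Polynomial ℂ)) ^ j)

namespace LinearMap

open Module Submodule

section Ring

variable {R E F : Type*} [Ring R] [AddCommGroup E] [Module R E] [AddCommGroup F] [Module R F]
  (f : E →ₗ[R] F) (W : Submodule R F)

abbrev restrictPreimage : W.comap f →ₗ[R] W :=
  f.restrict fun _ hx => hx

def kerRestrictPreimageEquiv : ker (f.restrictPreimage W) ≃ₗ[R] ker f :=
  (LinearEquiv.ofEq _ _ (ker_restrict _)).trans (comapSubtypeEquivOfLe (comap_mono bot_le))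

theorem range_restrictPreimage :
    range (f.restrictPreimage W) = ker ((range f).mkQ ∘ₗ W.subtype) := by
  rw [range_restrict, map_comap_eq, ker_comp, ker_mkQ, comap_inf, comap_subtype_self, inf_top_eq]

variable {f W}

theorem surjective_mkQ_comp_subtype (h : range f ⊔ W = ⊤) :
    Function.Surjective ((range f).mkQ ∘ₗ W.subtype) := by
  rintro ⟨y⟩
  obtain ⟨_, ⟨x, rfl⟩, w, hw, hy⟩ := mem_sup.mp (h ▸ mem_top : y ∈ range f ⊔ W)
  exact ⟨⟨w, hw⟩, (Submodule.Quotient.eq _).mpr (by simp [← hy])⟩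

noncomputable def quotientRangeRestrictPreimageEquiv (h : range f ⊔ W = ⊤) :
    (W ⧸ range (f.restrictPreimage W)) ≃ₗ[R] F ⧸ range f :=
  (quotEquivOfEq _ _ (range_restrictPreimage f W)).trans
    (quotKerEquivOfSurjective _ (surjective_mkQ_comp_subtype h))

theorem index_restrictPreimage (h : range f ⊔ W = ⊤) :
    (f.restrictPreimage W).index = f.index := by
  rw [index_eq_finrank_sub, index_eq_finrank_sub, (kerRestrictPreimageEquiv f W).finrank_eq,
    (quotientRangeRestrictPreimageEquiv h).finrank_eq]

end Ring

section DivisionRing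

variable {K E F : Type*} [DivisionRing K] [AddCommGroup E] [Module K E] [AddCommGroup F]
  [Module K F] {f : E →ₗ[K] F} {W : Submodule K F} [FiniteDimensional K W]

theorem finiteDimensional_quotient_range (h : range f ⊔ W = ⊤) :
    FiniteDimensional K (F ⧸ range f) :=
  (quotientRangeRestrictPreimageEquiv h).finiteDimensional

theorem index_eq_finrank_comap_sub [FiniteDimensional K (W.comap f)] (h : range f ⊔ W = ⊤) :
    f.index = finrank K (W.comap f) - finrank K W := by
  rw [← index_restrictPreimage h, index_eq_of_finiteDimensional]

end DivisionRing

end LinearMap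

namespace Polynomial

variable {R : Type*}

theorem eq_top_of_X_pow_mem [Semiring R] {S : Submodule R R[X]} (h : ∀ k, X ^ k ∈ S) : S = ⊤ :=
  Submodule.eq_top_iff'.mpr fun p => p.induction_on' (fun _ _ => S.add_mem) fun n a => by
    rw [← C_mul_X_pow_eq_monomial, ← smul_eq_C_mul]
    exact S.smul_mem a (h n)

theorem degreeLT_le_of_X_pow_mem [Semiring R] {S : Submodule R R[X]} {k : ℕ}
    (h : ∀ j < k, X ^ j ∈ S) : degreeLT R k ≤ S := by
  classical
  rw [degreeLT_eq_span_X_pow, Submodule.span_le]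
  intro _ hx
  obtain ⟨j, hj, rfl⟩ := Finset.mem_image.mp hx
  exact h j (Finset.mem_range.mp hj)

theorem finrank_degreeLT [Ring R] [StrongRankCondition R] (n : ℕ) :
    Module.finrank R (degreeLT R n) = n := by
  rw [(degreeLTEquiv R n).finrank_eq, Module.finrank_fin_fun]

theorem iteratedDeriv_eval {𝕜 : Type*} [NontriviallyNormedField 𝕜] (p : 𝕜[X]) (j : ℕ) :
    iteratedDeriv j (fun x => p.eval x) = fun x => (derivative^[j] p).eval x := by
  induction j with
  | zero => simp
  | succ j ih =>
    rw [iteratedDeriv_succ, ih, Function.iterate_succ_apply']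
    funext x
    exact Polynomial.deriv _

/-- `hQ` says `deg Q ≤ e - i` without truncated subtraction: `Q = 0` when `e < i`. -/
theorem coeff_mul_iterate_derivative_X_pow [CommSemiring R] {Q : R[X]} {e i : ℕ}
    (hQ : ∀ m, e < m + i → Q.coeff m = 0) {j n k : ℕ} (h : n + e ≤ k + (i + j)) :
    (Q * derivative^[j] (X ^ n)).coeff k =
      if k + (i + j) = n + e then Q.coeff (e - i) * n.descFactorial j else 0 := by
  rw [iterate_derivative_X_pow_eq_C_mul, mul_left_comm, coeff_C_mul, coeff_mul_X_pow']
  rcases lt_or_ge n j with hnj | hjn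
  · simp [Nat.descFactorial_eq_zero_iff_lt.mpr hnj]
  split_ifs with hk htop htop
  · rw [mul_comm, show k - (n - j) = e - i by omega]
  · rw [hQ _ (by omega), mul_zero]
  · rw [hQ _ (by omega), zero_mul, mul_zero]
  · rw [mul_zero]

end Polynomial

open Polynomial

theorem DLin_apply (μ : ℕ) (P : ℕ → ℂ[X]) (p : ℂ[X]) :
    DLin μ P p = ∑ j ∈ Finset.range (μ + 1), P (μ - j) * derivative^[j] p := by
  simp [DLin, LinearMap.sum_apply, Module.End.pow_apply]

theorem eval_DLin (μ : ℕ) (P : ℕ → ℂ[X]) (p : ℂ[X]) (z : ℂ) :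
    (DLin μ P p).eval z = Dop μ P (fun w => p.eval w) z := by
  simp only [DLin_apply, eval_finsetSum, eval_mul, Dop, iteratedDeriv_eval]

theorem eval_Rpoly_natCast (μ δ : ℕ) (P : ℕ → ℂ[X]) (n : ℕ) :
    (Rpoly μ δ P).eval (n : ℂ) =
      ∑ j ∈ Finset.range (μ + 1), (P (μ - j)).coeff (δ - (μ - j)) * n.descFactorial j := by
  simp only [Rpoly, eval_finsetSum, eval_mul, eval_C, eval_prod, eval_sub, eval_X,
    ← descPochhammer_eval_eq_prod_range, descPochhammer_eval_eq_descFactorial]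

section DegreeShift

variable {μ δ : ℕ} {P : ℕ → ℂ[X]} (hdeg : ∀ i, i ≤ μ → ∀ k, δ < k + i → (P i).coeff k = 0)
include hdeg

theorem coeff_DLin_X_pow {n k : ℕ} (h : n + δ ≤ k + μ) :
    (DLin μ P (X ^ n)).coeff k = if k + μ = n + δ then (Rpoly μ δ P).eval (n : ℂ) else 0 := by
  rw [DLin_apply, finsetSum_coeff, eval_Rpoly_natCast, ← Finset.sum_const_zero,
    ← Finset.sum_ite_irrel]
  refine Finset.sum_congr rfl fun j hj => ?_
  have hj : μ - j + j = μ := Nat.sub_add_cancel (Nat.lt_succ_iff.mp (Finset.mem_range.mp hj))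
  have := coeff_mul_iterate_derivative_X_pow (hdeg (μ - j) (Nat.sub_le μ j)) (hj ▸ h)
  rwa [hj] at this

theorem degreeLT_le_comap_DLin (n : ℕ) :
    degreeLT ℂ n ≤ (degreeLT ℂ (n + δ - μ)).comap (DLin μ P) := by
  refine degreeLT_le_of_X_pow_mem fun m hm => ?_
  rw [Submodule.mem_comap, mem_degreeLT, degree_lt_iff_coeff_zero]
  intro k hk
  rw [coeff_DLin_X_pow hdeg (by omega), if_neg (by omega)]

theorem coeff_DLin_natDegree (p : ℂ[X]) (h : μ ≤ p.natDegree + δ) :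
    (DLin μ P p).coeff (p.natDegree + δ - μ) =
      p.leadingCoeff * (Rpoly μ δ P).eval (p.natDegree : ℂ) := by
  rcases eq_or_ne p 0 with rfl | hp
  · simp
  have hlow : p.eraseLead ∈ degreeLT ℂ p.natDegree :=
    mem_degreeLT.mpr ((degree_eraseLead_lt hp).trans_le degree_le_natDegree)
  conv_lhs => arg 1; rw [← eraseLead_add_C_mul_X_pow p]
  have hlow' := mem_degreeLT.mp (degreeLT_le_comap_DLin hdeg _ hlow)
  rw [map_add, coeff_add, coeff_eq_zero_of_degree_lt hlow', ← smul_eq_C_mul, map_smul,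
    coeff_smul, coeff_DLin_X_pow hdeg (by omega), if_pos (by omega),
    smul_eq_mul, zero_add]

theorem DLin_X_pow_sub_mem_degreeLT {n : ℕ} (h : μ ≤ n + δ) :
    DLin μ P (X ^ n) - C ((Rpoly μ δ P).eval (n : ℂ)) * X ^ (n + δ - μ) ∈
      degreeLT ℂ (n + δ - μ) := by
  rw [mem_degreeLT, degree_lt_iff_coeff_zero]
  intro k hk
  rw [coeff_sub, coeff_C_mul_X_pow, coeff_DLin_X_pow hdeg (by omega)]
  split_ifs <;> first | omega | simp

variable {M N : ℕ} (hR : ∀ k, M ≤ k → (Rpoly μ δ P).eval (k : ℂ) ≠ 0) (hN : N + μ = M + δ)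
include hR hN

theorem comap_DLin_degreeLT : (degreeLT ℂ N).comap (DLin μ P) = degreeLT ℂ M := by
  refine le_antisymm (fun p hp => ?_) fun p hp => by
    simpa [show M + δ - μ = N by omega] using degreeLT_le_comap_DLin hdeg M hp
  by_contra hpM
  have hp0 : p ≠ 0 := fun h => hpM (h ▸ (degreeLT ℂ M).zero_mem)
  have hMp : M ≤ p.natDegree := by
    rw [mem_degreeLT, degree_eq_natDegree hp0, not_lt] at hpM
    exact_mod_cast hpM
  have htop := coeff_DLin_natDegree hdeg p (by omega)
  rw [coeff_eq_zero_of_degree_lt ((mem_degreeLT.mp hp).trans_le (by norm_cast; omega))] at htop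
  exact mul_ne_zero (leadingCoeff_ne_zero.mpr hp0) (hR _ hMp) htop.symm

/-- The top coefficient of `z ^ k`, `k ≥ N`, is cancelled by a multiple of
`D (z ^ (k + μ - δ))`. -/
theorem range_DLin_sup_degreeLT : LinearMap.range (DLin μ P) ⊔ degreeLT ℂ N = ⊤ := by
  refine eq_top_of_X_pow_mem fun k => ?_
  induction k using Nat.strong_induction_on with | _ k ih
  by_cases hk : k < N
  · exact Submodule.mem_sup_right (mem_degreeLT.mpr (by rw [degree_X_pow]; exact_mod_cast hk))
  set n := k + μ - δ
  have hnk : n + δ - μ = k := by omega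
  have hlow := degreeLT_le_of_X_pow_mem ih (hnk ▸ DLin_X_pow_sub_mem_degreeLT hdeg (by omega))
  have hRn := hR n (by omega)
  have hX : X ^ k = ((Rpoly μ δ P).eval (n : ℂ))⁻¹ •
      (DLin μ P (X ^ n) - (DLin μ P (X ^ n) - C ((Rpoly μ δ P).eval (n : ℂ)) * X ^ k)) := by
    rw [sub_sub_cancel, smul_eq_C_mul, ← mul_assoc, ← C_mul, inv_mul_cancel₀ hRn, C_1, one_mul]
  rw [hX]
  exact Submodule.smul_mem _ _
    (Submodule.sub_mem _ (Submodule.mem_sup_left ⟨X ^ n, rfl⟩) (hnk ▸ hlow))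

end DegreeShift

theorem index_of_D_on_polynomials_general
    (μ δ M : ℕ) (P : ℕ → Polynomial ℂ)
    (hdeg : ∀ i, i ≤ μ → ∀ k, δ < k + i → (P i).coeff k = 0)
    (hM1 : μ ≤ δ + M)
    (hM2 : ∀ k : ℕ, M ≤ k → (Rpoly μ δ P).eval (k : ℂ) ≠ 0) :
    (∀ (p : Polynomial ℂ) (z : ℂ),
        (DLin μ P p).eval z = Dop μ P (fun w => p.eval w) z) ∧
    FiniteDimensional ℂ (LinearMap.ker (DLin μ P)) ∧
    (∀ p : Polynomial ℂ, DLin μ P p = 0 → p ∈ Polynomial.degreeLT ℂ M) ∧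
    FiniteDimensional ℂ (Polynomial ℂ ⧸ LinearMap.range (DLin μ P)) ∧
    (Module.finrank ℂ (Polynomial ℂ ⧸ LinearMap.range (DLin μ P)) : ℤ)
        - (Module.finrank ℂ (LinearMap.ker (DLin μ P)) : ℤ)
      = (δ : ℤ) - (μ : ℤ) := by
  have hN : (M + δ - μ) + μ = M + δ := by omega
  have hcomap := comap_DLin_degreeLT hdeg hM2 hN
  have hsup := range_DLin_sup_degreeLT hdeg hM2 hN
  have hker : LinearMap.ker (DLin μ P) ≤ degreeLT ℂ M :=
    hcomap ▸ Submodule.comap_mono bot_le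
  have : FiniteDimensional ℂ ((degreeLT ℂ (M + δ - μ)).comap (DLin μ P)) := hcomap ▸ inferInstance
  have hindex := LinearMap.index_eq_finrank_comap_sub hsup
  rw [hcomap, finrank_degreeLT, finrank_degreeLT, LinearMap.index_eq_finrank_sub] at hindex
  exact ⟨eval_DLin μ P, Submodule.finiteDimensional_of_le hker, fun p hp => hker hp,
    LinearMap.finiteDimensional_quotient_range hsup, by omega⟩

/-- `D` maps `ℂ[z]` to `ℂ[z]` (compatibly with the analytic operator), its kernel in `ℂ[z]`
is finite dimensional and contained in `ℂ[z]_{<M}`, the quotient `ℂ[z]/D(ℂ[z])` is finite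
dimensional, and the index of `D : ℂ[z] → ℂ[z]` equals `μ - δ`. -/
theorem index_of_D_on_polynomials
    (μ δ M : ℕ) (P : ℕ → Polynomial ℂ)
    (hμ : 1 ≤ μ)
    (hlead : (P 0).coeff δ ≠ 0)
    (hdeg : ∀ i, i ≤ μ → ∀ k, δ < k + i → (P i).coeff k = 0)
    (hM1 : μ ≤ δ + M)
    (hM2 : ∀ k : ℕ, M ≤ k → (Rpoly μ δ P).eval (k : ℂ) ≠ 0)
    (hMmin : ∀ M' : ℕ, M' < M →
      ¬ (μ ≤ δ + M' ∧ ∀ k : ℕ, M' ≤ k → (Rpoly μ δ P).eval (k : ℂ) ≠ 0)) :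
    (∀ (p : Polynomial ℂ) (z : ℂ),
        (DLin μ P p).eval z = Dop μ P (fun w => p.eval w) z) ∧
    FiniteDimensional ℂ (LinearMap.ker (DLin μ P)) ∧
    (∀ p : Polynomial ℂ, DLin μ P p = 0 → p ∈ Polynomial.degreeLT ℂ M) ∧
    FiniteDimensional ℂ (Polynomial ℂ ⧸ LinearMap.range (DLin μ P)) ∧
    (Module.finrank ℂ (Polynomial ℂ ⧸ LinearMap.range (DLin μ P)) : ℤ)
        - (Module.finrank ℂ (LinearMap.ker (DLin μ P)) : ℤ)
      = (δ : ℤ) - (μ : ℤ) :=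
  index_of_D_on_polynomials_general μ δ M P hdeg hM1 hM2
end

section
/- For every function f holomorphic on the cut plane Ω_θ such that D f coincides on Ω_θ with a polynomial, there exists a polynomial p ∈ ℂ[z] such that D(f − p) coincides on Ω_θ with a polynomial of degree < N. -/
open Complex Polynomial Finset

/-!
Because `∞` is a regular singularity, `D` acting on polynomials sends `z^k` to
`R(k) z^{k+δ-μ}` plus terms of lower degree. For `k ≥ M` we have `R(k) ≠ 0`, so the top
coefficient of any polynomial of degree `≥ N = M + δ - μ` is cancelled by subtracting
`D(c z^k)` for a suitable `c`; descending induction on the degree gives `p` with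
`deg (q - D p) < N`. Since `Ω_θ` is open and `f` is holomorphic there, `D (f - p) = D f - D p`
on `Ω_θ`.
-/

theorem Polynomial.iteratedDeriv_eval_s7 {𝕜 : Type*} [NontriviallyNormedField 𝕜] (p : 𝕜[X])
    (n : ℕ) : iteratedDeriv n (fun x => p.eval x) = fun x => (derivative^[n] p).eval x := by
  induction n generalizing p with
  | zero => simp
  | succ n ih =>
    rw [iteratedDeriv_succ', Function.iterate_succ_apply, ← ih]
    congr
    funext x
    exact p.deriv

theorem Polynomial.coeff_mul_iterate_derivative_X_pow_s7 {R : Type*} [CommSemiring R] (Q : R[X])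
    (j k m : ℕ) :
    (Q * derivative^[j] (X ^ k)).coeff m =
      k.descFactorial j * if k - j ≤ m then Q.coeff (m - (k - j)) else 0 := by
  rw [iterate_derivative_X_pow_eq_C_mul, mul_left_comm, coeff_C_mul, coeff_mul_X_pow']

theorem isOpen_cutPlane {S : Set ℂ} (hS : S.Finite) (θ : ℝ) : IsOpen (cutPlane S θ) := by
  set e := Complex.exp (Complex.I * ((Real.pi - θ : ℝ) : ℂ))
  have he : ‖e‖ = 1 := by simp only [e]; rw [mul_comm]; exact Complex.norm_exp_ofReal_mul_I _
  have hray : ∀ ρ : ℂ, IsClosed ((fun t : ℝ => ρ + t * e) '' Set.Ici 0) := fun ρ =>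
    have hiso : Isometry (fun t : ℝ => ρ + t * e) := Isometry.of_dist_eq fun t₁ t₂ => by
      rw [Complex.dist_eq, add_sub_add_left_eq_sub, ← sub_mul, norm_mul, he, mul_one,
        ← Complex.ofReal_sub, Complex.norm_real, Real.dist_eq, Real.norm_eq_abs]
    hiso.isClosedEmbedding.isClosedMap _ isClosed_Ici
  have hcut : cutPlane S θ = ⋂ ρ ∈ S, ((fun t : ℝ => ρ + t * e) '' Set.Ici 0)ᶜ := by
    ext z
    simp [cutPlane, e, eq_comm]
  rw [hcut]
  exact hS.isOpen_biInter fun ρ _ => (hray ρ).isOpen_compl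

theorem Dop_sub {μ : ℕ} {P : ℕ → ℂ[X]} {f g : ℂ → ℂ} {z : ℂ}
    (hf : ContDiffAt ℂ μ f z) (hg : ContDiffAt ℂ μ g z) :
    Dop μ P (f - g) z = Dop μ P f z - Dop μ P g z := by
  simp only [Dop, ← Finset.sum_sub_distrib, ← mul_sub]
  refine Finset.sum_congr rfl fun j hj => ?_
  have hjμ : (j : WithTop ℕ∞) ≤ μ := by exact_mod_cast Finset.mem_range_succ_iff.mp hj
  rw [iteratedDeriv_sub (hf.of_le hjμ) (hg.of_le hjμ)]

noncomputable def dopPoly (μ : ℕ) (P : ℕ → ℂ[X]) : ℂ[X] →ₗ[ℂ] ℂ[X] :=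
  ∑ j ∈ range (μ + 1), LinearMap.mulLeft ℂ (P (μ - j)) ∘ₗ derivative ^ j

theorem dopPoly_apply (μ : ℕ) (P : ℕ → ℂ[X]) (p : ℂ[X]) :
    dopPoly μ P p = ∑ j ∈ range (μ + 1), P (μ - j) * derivative^[j] p := by
  simp [dopPoly, LinearMap.sum_apply, Module.End.pow_apply]

theorem Dop_polynomial_eval (μ : ℕ) (P : ℕ → ℂ[X]) (p : ℂ[X]) (z : ℂ) :
    Dop μ P (fun w => p.eval w) z = (dopPoly μ P p).eval z := by
  simp [Dop, dopPoly_apply, Polynomial.iteratedDeriv_eval_s7, eval_finsetSum]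

section RegularAtInfinity

variable {μ δ : ℕ} {P : ℕ → ℂ[X]}
  (hdeg : ∀ i, i ≤ μ → ∀ k, δ < k + i → (P i).coeff k = 0)
include hdeg

theorem coeff_dopPoly_X_pow_of_lt {k m : ℕ} (hm : k + δ < m + μ) :
    (dopPoly μ P (X ^ k)).coeff m = 0 := by
  rw [dopPoly_apply, finsetSum_coeff]
  refine Finset.sum_eq_zero fun j hj => ?_
  have hjμ := Finset.mem_range_succ_iff.mp hj
  rw [coeff_mul_iterate_derivative_X_pow_s7]
  rcases lt_or_ge k j with hkj | hjk
  · simp [Nat.descFactorial_eq_zero_iff_lt.mpr hkj]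
  · split_ifs with h
    · rw [hdeg (μ - j) (by omega) _ (by omega), mul_zero]
    · rw [mul_zero]

theorem coeff_dopPoly_X_pow {k n : ℕ} (hkn : k + δ = n + μ) :
    (dopPoly μ P (X ^ k)).coeff n = (Rpoly μ δ P).eval (k : ℂ) := by
  rw [dopPoly_apply, finsetSum_coeff, Rpoly, eval_finsetSum]
  refine Finset.sum_congr rfl fun j hj => ?_
  have hjμ := Finset.mem_range_succ_iff.mp hj
  have hprod : ∏ l ∈ range j, ((k : ℂ) - l) = k.descFactorial j := by
    rw [← descPochhammer_eval_eq_prod_range, descPochhammer_eval_eq_descFactorial]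
  simp only [coeff_mul_iterate_derivative_X_pow_s7, eval_mul, eval_C, eval_prod, eval_sub, eval_X,
    hprod]
  rcases lt_or_ge k j with hkj | hjk
  · simp [Nat.descFactorial_eq_zero_iff_lt.mpr hkj]
  · by_cases hμj : μ ≤ δ + j
    · rw [if_pos (by omega), show n - (k - j) = δ - (μ - j) by omega, mul_comm]
    · rw [if_neg (by omega), hdeg (μ - j) (by omega) _ (by omega)]
      simp

theorem degree_sub_dopPoly_C_mul_X_pow_lt {k n : ℕ} (hkn : k + δ = n + μ)
    (hR : (Rpoly μ δ P).eval (k : ℂ) ≠ 0) {q : ℂ[X]} (hq : q.degree < ↑(n + 1)) :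
    (q - dopPoly μ P (C (q.coeff n / (Rpoly μ δ P).eval (k : ℂ)) * X ^ k)).degree < n := by
  refine (degree_lt_iff_coeff_zero _ _).mpr fun m hm => ?_
  rw [← smul_eq_C_mul, map_smul, coeff_sub, coeff_smul, smul_eq_mul]
  rcases hm.eq_or_lt with rfl | hnm
  · rw [coeff_dopPoly_X_pow hdeg hkn, div_mul_cancel₀ _ hR, sub_self]
  · rw [coeff_eq_zero_of_degree_lt (hq.trans_le (by exact_mod_cast hnm)),
      coeff_dopPoly_X_pow_of_lt hdeg (by omega), mul_zero, sub_zero]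

theorem exists_degree_sub_dopPoly_lt {M N : ℕ}
    (hR : ∀ k, M ≤ k → (Rpoly μ δ P).eval (k : ℂ) ≠ 0) (hN : N + μ = M + δ) (q : ℂ[X]) :
    ∃ p, (q - dopPoly μ P p).degree < N := by
  have hsmall : ∀ q : ℂ[X], q.degree < N → ∃ p, (q - dopPoly μ P p).degree < N :=
    fun q hq => ⟨0, by rwa [map_zero, sub_zero]⟩
  suffices ∀ n : ℕ, ∀ q : ℂ[X], q.degree < n → ∃ p, (q - dopPoly μ P p).degree < N from
    this _ q (degree_le_natDegree.trans_lt (by exact_mod_cast q.natDegree.lt_succ_self))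
  intro n
  induction n with
  | zero => exact fun q hq => hsmall q (hq.trans_le (by exact_mod_cast N.zero_le))
  | succ n ih =>
    intro q hq
    rcases lt_or_ge n N with hnN | hNn
    · exact hsmall q (hq.trans_le (by exact_mod_cast hnN))
    obtain ⟨j, rfl⟩ := Nat.exists_eq_add_of_le hNn
    obtain ⟨p, hp⟩ := ih _ (degree_sub_dopPoly_C_mul_X_pow_lt hdeg (k := M + j) (by omega)
      (hR _ (by omega)) hq)
    exact ⟨C _ * X ^ (M + j) + p, by rwa [map_add, ← sub_sub]⟩

end RegularAtInfinity

theorem reduce_degree_below_N_general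
    (μ δ M N : ℕ) (P : ℕ → Polynomial ℂ) (θ : ℝ)
    (hlead : (P 0).coeff δ ≠ 0)
    (hdeg : ∀ i, i ≤ μ → ∀ k, δ < k + i → (P i).coeff k = 0)
    (hM2 : ∀ k : ℕ, M ≤ k → (Rpoly μ δ P).eval (k : ℂ) ≠ 0)
    (hN : N + μ = M + δ)
    (f : ℂ → ℂ)
    (hf : DifferentiableOn ℂ f (cutPlane (Sing (P 0)) θ))
    (hDf : ∃ q : Polynomial ℂ, ∀ z ∈ cutPlane (Sing (P 0)) θ, Dop μ P f z = q.eval z) :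
    ∃ (p q : Polynomial ℂ), q.degree < (N : WithBot ℕ) ∧
      ∀ z ∈ cutPlane (Sing (P 0)) θ,
        Dop μ P (fun w => f w - p.eval w) z = q.eval z := by
  obtain ⟨q, hq⟩ := hDf
  obtain ⟨p, hp⟩ := exists_degree_sub_dopPoly_lt hdeg hM2 hN q
  have hΩ : IsOpen (cutPlane (Sing (P 0)) θ) :=
    isOpen_cutPlane (finite_setOfPred_isRoot fun h => hlead (by rw [h, coeff_zero])) θ
  refine ⟨p, q - dopPoly μ P p, hp, fun z hz => ?_⟩
  have hfz : ContDiffAt ℂ μ f z := (hf.contDiffOn hΩ).contDiffAt (hΩ.mem_nhds hz)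
  rw [← Pi.sub_def, Dop_sub hfz p.differentiable.contDiff.contDiffAt, hq z hz,
    Dop_polynomial_eval, eval_sub]

/-- For any `f` holomorphic on `Ω_θ` with `D f` equal on `Ω_θ` to a polynomial, there is a
polynomial `p` such that `D(f - p)` coincides on `Ω_θ` with a polynomial of degree `< N`. -/
theorem reduce_degree_below_N
    (μ δ M N : ℕ) (P : ℕ → Polynomial ℂ) (θ : ℝ)
    (hμ : 1 ≤ μ)
    (hlead : (P 0).coeff δ ≠ 0)
    (hdeg : ∀ i, i ≤ μ → ∀ k, δ < k + i → (P i).coeff k = 0)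
    (hM1 : μ ≤ δ + M)
    (hM2 : ∀ k : ℕ, M ≤ k → (Rpoly μ δ P).eval (k : ℂ) ≠ 0)
    (hMmin : ∀ M' : ℕ, M' < M →
      ¬ (μ ≤ δ + M' ∧ ∀ k : ℕ, M' ≤ k → (Rpoly μ δ P).eval (k : ℂ) ≠ 0))
    (hN : N + μ = M + δ)
    (hθ : GoodDirection (Sing (P 0)) θ)
    (f : ℂ → ℂ)
    (hf : DifferentiableOn ℂ f (cutPlane (Sing (P 0)) θ))
    (hDf : ∃ q : Polynomial ℂ, ∀ z ∈ cutPlane (Sing (P 0)) θ, Dop μ P f z = q.eval z) :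
    ∃ (p q : Polynomial ℂ), q.degree < (N : WithBot ℕ) ∧
      ∀ z ∈ cutPlane (Sing (P 0)) θ,
        Dop μ P (fun w => f w - p.eval w) z = q.eval z :=
  reduce_degree_below_N_general μ δ M N P θ hlead hdeg hM2 hN f hf hDf
end

section
/- Let α ∈ ℂ with Re α > −1, let i ∈ ℕ, and let z ∈ ℂ with Re z > 0. Then ∫_0^∞ t^α (log t)^i e^{−zt} dt = Σ_{k=0}^{i} C(i,k) · Γ^{(i−k)}(α+1) · (−Log z)^k · exp(−(α+1)·Log z), where Log denotes the principal branch of the complex logarithm and Γ^{(m)} the m-th derivative of the Gamma function; equivalently, the left-hand side equals the i-th derivative at y = α of the function y ↦ Γ(y+1)·exp(−(y+1)·Log z). -/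
/-!
The left-hand side is the Mellin transform at `α + 1` of `t ↦ (log t)^i e^{-zt}`.
Differentiating a Mellin transform under the integral sign multiplies the integrand by `log t`,
so this is the `i`-th derivative at `α + 1` of `M(s) = ∫₀^∞ t^{s-1} e^{-zt} dt`. For real
`z > 0` the substitution `u = zt` gives `M(s) = Γ(s) e^{-s Log z}`; both sides are holomorphic
in `z` on the right half-plane, so the identity theorem extends this to `Re z > 0`. The Leibniz
rule for `Γ(s) · e^{-s Log z}` then yields the binomial sum.
-/

open Complex MeasureTheory Set Filter Asymptotics Topology

theorem integrableOn_rpow_mul_exp_neg_mul {a b : ℝ} (ha : -1 < a) (hb : 0 < b) :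
    IntegrableOn (fun t : ℝ => t ^ a * Real.exp (-b * t)) (Ioi 0) := by
  simpa using integrableOn_rpow_mul_exp_neg_mul_rpow ha one_pos hb

theorem norm_cexp_neg_mul_ofReal (w : ℂ) (t : ℝ) :
    ‖cexp (-w * t)‖ = Real.exp (-w.re * t) := by
  simp [norm_exp]

theorem norm_cpow_mul_cexp_neg_mul {u w : ℂ} {t : ℝ} (ht : 0 < t) :
    ‖(t : ℂ) ^ u * cexp (-w * t)‖ = t ^ u.re * Real.exp (-w.re * t) := by
  rw [norm_mul, norm_cpow_eq_rpow_re_of_pos ht, norm_cexp_neg_mul_ofReal]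

theorem continuousOn_cpow_mul_cexp_neg_mul (u w : ℂ) :
    ContinuousOn (fun t : ℝ => (t : ℂ) ^ u * cexp (-w * t)) (Ioi 0) :=
  (continuousOn_of_forall_continuousAt fun t (ht : 0 < t) =>
    continuousAt_ofReal_cpow_const _ _ (Or.inr ht.ne')).mul (by fun_prop)

theorem integrableOn_cpow_mul_cexp_neg_mul {u w : ℂ} (hu : -1 < u.re) (hw : 0 < w.re) :
    IntegrableOn (fun t : ℝ => (t : ℂ) ^ u * cexp (-w * t)) (Ioi 0) := by
  refine (integrableOn_rpow_mul_exp_neg_mul hu hw).mono'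
    ((continuousOn_cpow_mul_cexp_neg_mul u w).aestronglyMeasurable measurableSet_Ioi) ?_
  filter_upwards [ae_restrict_mem measurableSet_Ioi] with t ht
  exact (norm_cpow_mul_cexp_neg_mul ht).le

theorem hasDerivAt_integral_cpow_mul_cexp_neg_mul {s w : ℂ} (hs : 0 < s.re) (hw : 0 < w.re) :
    HasDerivAt (fun w => ∫ t in Ioi (0 : ℝ), (t : ℂ) ^ (s - 1) * cexp (-w * t))
      (-∫ t in Ioi (0 : ℝ), (t : ℂ) ^ s * cexp (-w * t)) w := by
  have hU : {x : ℂ | w.re / 2 < x.re} ∈ 𝓝 w :=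
    (isOpen_lt continuous_const continuous_re).mem_nhds (show w.re / 2 < w.re by linarith)
  rw [← integral_neg]
  refine (hasDerivAt_integral_of_dominated_loc_of_deriv_le hU
    (F' := fun x t => -((t : ℂ) ^ s * cexp (-x * t)))
    (.of_forall fun x => (continuousOn_cpow_mul_cexp_neg_mul _ x).aestronglyMeasurable
      measurableSet_Ioi)
    (integrableOn_cpow_mul_cexp_neg_mul (u := s - 1) (by simpa using hs) hw)
    ((continuousOn_cpow_mul_cexp_neg_mul s w).fun_neg.aestronglyMeasurable measurableSet_Ioi)
    (bound := fun t => t ^ s.re * Real.exp (-(w.re / 2) * t)) ?_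
    (integrableOn_rpow_mul_exp_neg_mul (by linarith) (half_pos hw)) ?_).2
  · filter_upwards [ae_restrict_mem measurableSet_Ioi] with t (ht : 0 < t) x (hx : w.re / 2 < x.re)
    rw [norm_neg, norm_cpow_mul_cexp_neg_mul ht]
    gcongr
  · filter_upwards [ae_restrict_mem measurableSet_Ioi] with t (ht : 0 < t) x _
    have hpow : (t : ℂ) ^ (s - 1) * t = (t : ℂ) ^ s := by
      have ht' : (t : ℂ) ≠ 0 := ofReal_ne_zero.2 ht.ne'
      rw [cpow_sub _ _ ht', cpow_one, div_mul_cancel₀ _ ht']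
    refine ((((hasDerivAt_id x).neg.mul_const (t : ℂ)).cexp).const_mul
      ((t : ℂ) ^ (s - 1))).congr_deriv ?_
    rw [← hpow, Pi.neg_apply, id]
    ring

theorem integral_cpow_mul_cexp_neg_mul_Ioi {s z : ℂ} (hs : 0 < s.re) (hz : 0 < z.re) :
    ∫ t in Ioi (0 : ℝ), (t : ℂ) ^ (s - 1) * cexp (-z * t) = Gamma s * cexp (-log z * s) := by
  let H := {w : ℂ | 0 < w.re}
  let F := fun w : ℂ => ∫ t in Ioi (0 : ℝ), (t : ℂ) ^ (s - 1) * cexp (-w * t)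
  let G := fun w : ℂ => Gamma s * cexp (-log w * s)
  have hH : IsOpen H := isOpen_lt continuous_const continuous_re
  have hF : AnalyticOnNhd ℂ F H := DifferentiableOn.analyticOnNhd (fun w hw =>
    (hasDerivAt_integral_cpow_mul_cexp_neg_mul hs hw).differentiableAt.differentiableWithinAt) hH
  have hG : AnalyticOnNhd ℂ G H := DifferentiableOn.analyticOnNhd (fun w (hw : 0 < w.re) =>
    (((differentiableAt_log (.inl hw)).neg.mul_const s).cexp.const_mul _).differentiableWithinAt) hH
  have hreal : ∀ r : ℝ, 0 < r → F r = G r := by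
    intro r hr
    have harg : (r : ℂ).arg ≠ Real.pi := by
      rw [arg_ofReal_of_nonneg hr.le]
      exact Real.pi_ne_zero.symm
    dsimp only [F, G]
    simp_rw [neg_mul, integral_cpow_mul_exp_neg_mul_Ioi hs hr, one_div, inv_cpow _ _ harg,
      cpow_def_of_ne_zero (ofReal_ne_zero.2 hr.ne'), exp_neg]
    ring
  have hfreq : ∃ᶠ w in 𝓝[≠] (1 : ℂ), F w = G w := by
    have hofReal : Tendsto ((↑) : ℝ → ℂ) (𝓝[≠] 1) (𝓝[≠] 1) :=
      tendsto_nhdsWithin_iff.2 ⟨(continuous_ofReal.tendsto 1).mono_left nhdsWithin_le_nhds,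
        eventually_nhdsWithin_of_forall fun x hx => by simpa using hx⟩
    exact hofReal.frequently
      (((eventually_gt_nhds one_pos).filter_mono nhdsWithin_le_nhds).mono hreal).frequently
  exact hF.eqOn_of_preconnected_of_frequently_eq hG (convex_halfSpace_re_gt 0).isPreconnected
    (by simp [H]) hfreq hz

section MellinLogPow

variable {E : Type*} [NormedAddCommGroup E] {f : ℝ → E}

theorem isBigO_log_pow_smul_atTop [NormedSpace ℝ E] {c : ℝ} (hc : 0 < c)
    (hf : f =O[atTop] fun t => Real.exp (-c * t)) (j : ℕ) (a : ℝ) :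
    (fun t => Real.log t ^ j • f t) =O[atTop] (· ^ (-a)) := by
  have hprod := (Real.isLittleO_pow_log_id_atTop (n := j)).isBigO.smul
    (hf.trans (isLittleO_exp_neg_mul_rpow_atTop hc (-a - 1)).isBigO)
  refine hprod.congr' EventuallyEq.rfl ?_
  filter_upwards [eventually_gt_atTop 0] with t ht
  rw [id, smul_eq_mul, mul_comm, ← Real.rpow_add_one ht.ne']
  ring_nf

theorem isBigO_log_pow_smul_nhdsGT_zero [NormedSpace ℝ E] {b b' : ℝ} (hf : f =O[𝓝[>] 0] (· ^ (-b)))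
    (hb : b < b') (j : ℕ) :
    (fun t => Real.log t ^ j • f t) =O[𝓝[>] 0] (· ^ (-b')) := by
  have hlog : (fun t => Real.log t ^ j) =O[𝓝[>] 0] (· ^ (b - b')) :=
    (isBigO_of_le _ fun t => by simp).trans
      (isLittleO_abs_log_rpow_rpow_nhdsGT_zero j (by linarith)).isBigO
  refine (hlog.smul hf).congr' EventuallyEq.rfl ?_
  filter_upwards [self_mem_nhdsWithin] with t (ht : 0 < t)
  rw [smul_eq_mul, ← Real.rpow_add ht]
  ring_nf

variable [NormedSpace ℂ E] {b c : ℝ}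

theorem hasDerivAt_mellin_log_pow_smul (hfc : LocallyIntegrableOn f (Ioi 0)) (hc : 0 < c)
    (hf_top : f =O[atTop] fun t => Real.exp (-c * t)) (hf_bot : f =O[𝓝[>] 0] (· ^ (-b)))
    (j : ℕ) {s : ℂ} (hs : b < s.re) :
    HasDerivAt (mellin fun t => Real.log t ^ j • f t)
      (mellin (fun t => Real.log t ^ (j + 1) • f t) s) s := by
  have hloc : LocallyIntegrableOn (fun t => Real.log t ^ j • f t) (Ioi 0) :=
    hfc.continuousOn_smul isOpen_Ioi.isLocallyClosed
      ((Real.continuousOn_log.mono fun t ht => (ne_of_gt ht : t ≠ 0)).pow j)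
  have h := mellin_hasDerivAt_of_isBigO_rpow hloc
    (isBigO_log_pow_smul_atTop hc hf_top j (s.re + 1)) (by linarith)
    (isBigO_log_pow_smul_nhdsGT_zero hf_bot (b' := (b + s.re) / 2) (by linarith) j)
    (by linarith)
  simpa only [smul_smul, ← pow_succ'] using h.2

theorem mellin_log_pow_smul_eqOn_iteratedDeriv (hfc : LocallyIntegrableOn f (Ioi 0))
    (hc : 0 < c) (hf_top : f =O[atTop] fun t => Real.exp (-c * t))
    (hf_bot : f =O[𝓝[>] 0] (· ^ (-b))) (j : ℕ) :
    EqOn (mellin fun t => Real.log t ^ j • f t) (iteratedDeriv j (mellin f)) {s | b < s.re} := by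
  induction j with
  | zero => intro s _; simp
  | succ j ih =>
    intro s hs
    have hU : IsOpen {s : ℂ | b < s.re} := isOpen_lt continuous_const continuous_re
    rw [iteratedDeriv_succ, ← (hasDerivAt_mellin_log_pow_smul hfc hc hf_top hf_bot j hs).deriv]
    exact (eventuallyEq_of_mem (hU.mem_nhds hs) ih).deriv_eq

end MellinLogPow

theorem analyticAt_Gamma_of_re_pos {s : ℂ} (hs : 0 < s.re) : AnalyticAt ℂ Gamma s := by
  refine DifferentiableOn.analyticAt (s := {w : ℂ | 0 < w.re}) (fun w (hw : 0 < w.re) => ?_)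
    ((isOpen_lt continuous_const continuous_re).mem_nhds hs)
  refine (differentiableAt_Gamma w ?_).differentiableWithinAt
  rintro m rfl
  simp only [neg_re, natCast_re, Left.neg_pos_iff] at hw
  exact (Nat.cast_nonneg m).not_gt hw

theorem iteratedDeriv_mul_cexp_const_mul {g : ℂ → ℂ} {s : ℂ} {n : ℕ}
    (hg : ContDiffAt ℂ n g s) (c : ℂ) :
    iteratedDeriv n (fun y => g y * cexp (c * y)) s =
      ∑ k ∈ Finset.range (n + 1),
        (n.choose k : ℂ) * iteratedDeriv (n - k) g s * c ^ k * cexp (c * s) := by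
  simp_rw [mul_comm (g _)]
  rw [iteratedDeriv_fun_mul (by fun_prop) hg]
  simp only [iteratedDeriv_cexp_const_mul]
  exact Finset.sum_congr rfl fun k _ => by ring

/-- Watson-type formula: for `Re α > -1` and `Re z > 0`,
`∫₀^∞ t^α (log t)^i e^{-zt} dt = ∑_{k=0}^i C(i,k) Γ^{(i-k)}(α+1) (-Log z)^k e^{-(α+1) Log z}`. -/
theorem laplace_of_log_power
    (α z : ℂ) (i : ℕ) (hα : -1 < α.re) (hz : 0 < z.re) :
    (∫ t in Set.Ioi (0 : ℝ),
        Complex.exp (α * (Real.log t : ℂ)) * ((Real.log t : ℂ)) ^ i *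
          Complex.exp (-z * (t : ℂ)))
      = ∑ k ∈ Finset.range (i + 1),
          (Nat.choose i k : ℂ) * iteratedDeriv (i - k) Complex.Gamma (α + 1) *
            (-(Complex.log z)) ^ k * Complex.exp (-(α + 1) * Complex.log z) := by
  have hs : 0 < (α + 1).re := by simp; linarith
  have hf_top : (fun t : ℝ => cexp (-z * t)) =O[atTop] fun t => Real.exp (-z.re * t) :=
    isBigO_of_le _ fun t => by
      rw [norm_cexp_neg_mul_ofReal, Real.norm_of_nonneg (Real.exp_nonneg _)]
  have hf_cont : Continuous fun t : ℝ => cexp (-z * t) := by fun_prop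
  have hf_bot : (fun t : ℝ => cexp (-z * t)) =O[𝓝[>] 0] (· ^ (-(0 : ℝ))) := by
    simpa using ((hf_cont.tendsto 0).isBigO_one ℝ).mono nhdsWithin_le_nhds
  have hmellin := mellin_log_pow_smul_eqOn_iteratedDeriv
    (hf_cont.locallyIntegrable.locallyIntegrableOn _) hz hf_top hf_bot i hs
  have hbase : mellin (fun t : ℝ => cexp (-z * t)) =ᶠ[𝓝 (α + 1)]
      fun s => Gamma s * cexp (-log z * s) :=
    eventuallyEq_of_mem ((isOpen_lt continuous_const continuous_re).mem_nhds hs)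
      fun s (hs' : 0 < s.re) => integral_cpow_mul_cexp_neg_mul_Ioi hs' hz
  calc _ = mellin (fun t : ℝ => Real.log t ^ i • cexp (-z * t)) (α + 1) := by
        refine setIntegral_congr_fun measurableSet_Ioi fun t (ht : 0 < t) => ?_
        dsimp only
        rw [add_sub_cancel_right, cpow_def_of_ne_zero (ofReal_ne_zero.2 ht.ne'),
          ← ofReal_log ht.le, smul_eq_mul, real_smul, ofReal_pow, mul_comm α, mul_assoc]
    _ = iteratedDeriv i (fun s => Gamma s * cexp (-log z * s)) (α + 1) := by
        rw [hmellin, hbase.iteratedDeriv_eq]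
    _ = _ := by
        rw [iteratedDeriv_mul_cexp_const_mul (analyticAt_Gamma_of_re_pos hs).contDiffAt,
          show -(α + 1) * log z = -log z * (α + 1) by ring]
end

section
/- For every real x > 0, ∫_0^∞ e^{−t}/(x+t) dt = −e^x · ( Σ_{n=1}^{∞} (−1)^n x^n/(n·n!) + log x + γ ), where γ is the Euler–Mascheroni constant. (For x = 1 the left-hand side is Gompertz's constant.) -/
/-!
Substituting `s = x + t` turns the integral into `e^x E₁(x)`, where `E₁(x) = ∫ₓ^∞ e^{-s}/s ds`.
Writing `S` for the series of the statement, `E₁(x) + log x + S(x)` has derivative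
`-e^{-x}/x + 1/x + (e^{-x} - 1)/x = 0` on `(0, ∞)`, so it is constant there. The constant is its
limit as `x → 0⁺`: integrating by parts, `E₁(x) + log x = (1 - e^{-x}) log x + ∫ₓ^∞ e^{-s} log s ds`,
which tends to `∫₀^∞ e^{-s} log s ds = Γ'(1) = -γ`, while `S(x) → 0`.
-/

open MeasureTheory Set Filter Topology Real

namespace Gompertz

noncomputable def expIntegralE1 (x : ℝ) : ℝ := ∫ s in Ioi x, exp (-s) / s

noncomputable def expIntegralSeries (x : ℝ) : ℝ :=
  ∑' n : ℕ, (-1 : ℝ) ^ (n + 1) * x ^ (n + 1) / ((n + 1 : ℝ) * (n + 1).factorial)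

lemma integrableOn_exp_neg_mul_log : IntegrableOn (fun t : ℝ => exp (-t) * log t) (Ioi 0) := by
  have hexp : Continuous fun t : ℝ => (exp (-t) : ℂ) := by fun_prop
  have h : MellinConvergent (fun t : ℝ => log t • (exp (-t) : ℂ)) 1 := by
    refine (mellin_hasDerivAt_of_isBigO_rpow (a := 2) (b := 0) (E := ℂ)
      (hexp.continuousOn.locallyIntegrableOn measurableSet_Ioi) ?_ (by norm_num) ?_
      (by norm_num)).1
    · rw [← Asymptotics.isBigO_norm_left]
      simp_rw [Complex.norm_real, Asymptotics.isBigO_norm_left]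
      simpa [neg_one_mul] using (isLittleO_exp_neg_mul_rpow_atTop zero_lt_one (-2)).isBigO
    · simpa using ((hexp.tendsto 0).mono_left nhdsWithin_le_nhds).isBigO_one ℝ
  refine IntegrableOn.congr_fun (Integrable.re h) (fun t _ => ?_) measurableSet_Ioi
  simp [mul_comm, -Complex.ofReal_exp]

lemma integral_exp_neg_mul_log : ∫ t in Ioi 0, exp (-t) * log t = -eulerMascheroniConstant := by
  have hGammaIntegral := Complex.hasDerivAt_GammaIntegral (s := 1) (by norm_num)
  have hGamma : HasDerivAt Complex.Gamma _ 1 := hGammaIntegral.congr_of_eventuallyEq <|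
    (Complex.continuous_re.isOpen_preimage _ isOpen_Ioi).eventually_mem (by simp)
      |>.mono fun s hs => Complex.Gamma_eq_integral hs
  rw [← Complex.ofReal_inj, Complex.ofReal_neg, ← hGamma.unique Complex.hasDerivAt_Gamma_one,
    ← integral_complex_ofReal]
  refine setIntegral_congr_fun measurableSet_Ioi fun t _ => ?_
  push_cast
  simp [mul_comm]

lemma continuousOn_exp_neg_div : ContinuousOn (fun s => exp (-s) / s) (Ioi 0) := by
  fun_prop (disch := exact fun s hs => (mem_Ioi.1 hs).ne')

lemma integrableOn_exp_neg_div {a : ℝ} (ha : 0 < a) :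
    IntegrableOn (fun s => exp (-s) / s) (Ioi a) := by
  have hexp : IntegrableOn (fun s => exp (-s)) (Ioi a) := by
    simpa using exp_neg_integrableOn_Ioi a one_pos
  refine (hexp.div_const a).mono'
    ((continuousOn_exp_neg_div.mono (Ioi_subset_Ioi ha.le)).aestronglyMeasurable measurableSet_Ioi)
    ((ae_restrict_iff' measurableSet_Ioi).2 (ae_of_all _ fun s hs => ?_))
  rw [norm_div, norm_of_nonneg (exp_pos _).le, norm_of_nonneg (ha.trans hs).le]
  gcongr
  exact hs.le

lemma integral_exp_neg_div_add (x : ℝ) :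
    ∫ t in Ioi 0, exp (-t) / (x + t) = exp x * expIntegralE1 x := by
  symm
  rw [expIntegralE1, ← integral_const_mul,
    ← (measurePreserving_add_right volume x).setIntegral_preimage_emb
      (measurableEmbedding_addRight x), preimage_add_const_Ioi, sub_self]
  refine setIntegral_congr_fun measurableSet_Ioi fun t _ => ?_
  rw [add_comm t x, neg_add, exp_add, exp_neg x]
  field_simp

lemma hasDerivAt_expIntegralE1 {y : ℝ} (hy : 0 < y) :
    HasDerivAt expIntegralE1 (-(exp (-y) / y)) y := by
  have hsplit : ∀ᶠ z in 𝓝 y,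
      (∫ s in z..1, exp (-s) / s) + ∫ s in Ioi 1, exp (-s) / s = expIntegralE1 z := by
    filter_upwards [Ioi_mem_nhds hy] with z hz using intervalIntegral.integral_interval_add_Ioi
      (integrableOn_exp_neg_div hz) (integrableOn_exp_neg_div one_pos)
  have hint : IntervalIntegrable (fun s => exp (-s) / s) volume y 1 :=
    (continuousOn_exp_neg_div.mono fun s hs => (lt_min hy one_pos).trans_le hs.1).intervalIntegrable
  exact ((intervalIntegral.integral_hasDerivAt_left hint
    (continuousOn_exp_neg_div.stronglyMeasurableAtFilter isOpen_Ioi y hy)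
    (continuousOn_exp_neg_div.continuousAt (Ioi_mem_nhds hy))).add_const _).congr_of_eventuallyEq
    (hsplit.mono fun z hz => hz.symm)

lemma hasDerivAt_exp_neg_mul_log {s : ℝ} (hs : s ≠ 0) :
    HasDerivAt (fun s => exp (-s) * log s) (exp (-s) / s - exp (-s) * log s) s :=
  ((hasDerivAt_neg s).exp.mul (hasDerivAt_log hs)).congr_deriv (by ring)

lemma tendsto_exp_neg_mul_log_atTop : Tendsto (fun s => exp (-s) * log s) atTop (𝓝 0) := by
  have h := isLittleO_log_id_atTop.tendsto_div_nhds_zero.mul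
    (tendsto_pow_mul_exp_neg_atTop_nhds_zero 1)
  rw [zero_mul] at h
  refine h.congr' ((eventually_ne_atTop 0).mono fun s hs => ?_)
  simp only [id, pow_one]
  field_simp

lemma expIntegralE1_eq_integral_exp_neg_mul_log {y : ℝ} (hy : 0 < y) :
    expIntegralE1 y = -(exp (-y) * log y) + ∫ s in Ioi y, exp (-s) * log s := by
  have hlog := integrableOn_exp_neg_mul_log.mono_set (Ioi_subset_Ioi hy.le)
  have hparts := integral_Ioi_of_hasDerivAt_of_tendsto'
    (fun s hs => hasDerivAt_exp_neg_mul_log (hy.trans_le hs).ne')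
    ((integrableOn_exp_neg_div hy).sub hlog) tendsto_exp_neg_mul_log_atTop
  rw [integral_sub (integrableOn_exp_neg_div hy) hlog] at hparts
  rw [expIntegralE1]
  linarith

lemma tendsto_one_sub_exp_neg_mul_log_nhdsGT_zero :
    Tendsto (fun y => (1 - exp (-y)) * log y) (𝓝[>] 0) (𝓝 0) := by
  have hmul : Tendsto (fun y => log y * y) (𝓝[>] 0) (𝓝 0) := by
    simpa using tendsto_log_mul_rpow_nhdsGT_zero one_pos
  refine squeeze_zero_norm' ?_ (by simpa using hmul.norm)
  filter_upwards [self_mem_nhdsWithin] with y (hy : 0 < y)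
  rw [norm_mul, norm_of_nonneg (sub_nonneg.2 (exp_le_one_iff.2 (neg_nonpos.2 hy.le))),
    Real.norm_eq_abs, abs_of_pos hy, mul_comm]
  gcongr
  linarith [add_one_le_exp (-y)]

lemma hasSum_pow_succ_div_factorial (x : ℝ) :
    HasSum (fun n : ℕ => x ^ (n + 1) / (n + 1).factorial) (exp x - 1) := by
  simpa [Real.exp_eq_exp_ℝ] using
    (hasSum_nat_add_iff' 1).2 (NormedSpace.expSeries_div_hasSum_exp x)

lemma hasDerivAt_expIntegralSeries_term (n : ℕ) (z : ℝ) :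
    HasDerivAt (fun z : ℝ => (-1) ^ (n + 1) * z ^ (n + 1) / ((n + 1 : ℝ) * (n + 1).factorial))
      ((-1) ^ (n + 1) * z ^ n / (n + 1).factorial) z := by
  refine (((hasDerivAt_pow (n + 1) z).const_mul ((-1 : ℝ) ^ (n + 1))).div_const
    ((n + 1 : ℝ) * (n + 1).factorial)).congr_deriv ?_
  push_cast
  field_simp

lemma hasDerivAt_expIntegralSeries (y : ℝ) :
    HasDerivAt expIntegralSeries (∑' n : ℕ, (-1) ^ (n + 1) * y ^ n / (n + 1).factorial) y := by
  set R := |y| + 1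
  refine hasDerivAt_tsum_of_isPreconnected (Real.summable_pow_div_factorial R)
    Metric.isOpen_ball (convex_ball 0 R).isPreconnected
    (fun n z _ => hasDerivAt_expIntegralSeries_term n z) (fun n z hz => ?_)
    (Metric.mem_ball_self (by positivity)) (by simp) (by simp [R])
  rw [mem_ball_zero_iff] at hz
  rw [norm_div, norm_mul, norm_pow, norm_pow, norm_neg, norm_one, one_pow, one_mul,
    RCLike.norm_natCast]
  gcongr
  exact n.le_succ

lemma tsum_eq_exp_neg_sub_one_div {y : ℝ} (hy : y ≠ 0) :
    ∑' n : ℕ, (-1) ^ (n + 1) * y ^ n / (n + 1).factorial = (exp (-y) - 1) / y := by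
  refine (((hasSum_pow_succ_div_factorial (-y)).div_const y).congr_fun fun n => ?_).tsum_eq
  rw [neg_pow]
  field_simp
  ring

lemma expIntegralSeries_zero : expIntegralSeries 0 = 0 := by
  simp [expIntegralSeries]

lemma hasDerivAt_expIntegralE1_add_log_add_expIntegralSeries {y : ℝ} (hy : 0 < y) :
    HasDerivAt (fun y => expIntegralE1 y + log y + expIntegralSeries y) 0 y := by
  have h := ((hasDerivAt_expIntegralE1 hy).add (hasDerivAt_log hy.ne')).add
    (hasDerivAt_expIntegralSeries y)
  rw [tsum_eq_exp_neg_sub_one_div hy.ne'] at h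
  refine h.congr_deriv ?_
  field_simp
  ring

lemma tendsto_expIntegralE1_add_log_add_expIntegralSeries_nhdsGT_zero :
    Tendsto (fun y => expIntegralE1 y + log y + expIntegralSeries y) (𝓝[>] 0)
      (𝓝 (-eulerMascheroniConstant)) := by
  have htail : Tendsto (fun y => ∫ s in Ioi y, exp (-s) * log s) (𝓝[>] 0)
      (𝓝 (-eulerMascheroniConstant)) := by
    rw [← integral_exp_neg_mul_log]
    exact integrableOn_exp_neg_mul_log.continuousWithinAt_Ici_primitive_Ioi.mono_left
      (nhdsWithin_mono _ Ioi_subset_Ici_self)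
  have hseries : Tendsto expIntegralSeries (𝓝[>] 0) (𝓝 0) := by
    simpa only [expIntegralSeries_zero] using
      ((hasDerivAt_expIntegralSeries 0).continuousAt.continuousWithinAt (s := Ioi 0)).tendsto
  have h := (tendsto_one_sub_exp_neg_mul_log_nhdsGT_zero.add htail).add hseries
  rw [zero_add, add_zero] at h
  refine h.congr' ?_
  filter_upwards [self_mem_nhdsWithin] with y hy
  rw [expIntegralE1_eq_integral_exp_neg_mul_log hy]
  ring

lemma expIntegralE1_add_log_add_expIntegralSeries {x : ℝ} (hx : 0 < x) :
    expIntegralE1 x + log x + expIntegralSeries x = -eulerMascheroniConstant := by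
  have hderiv := fun y (hy : y ∈ Ioi (0 : ℝ)) =>
    hasDerivAt_expIntegralE1_add_log_add_expIntegralSeries hy
  have hconst : ∀ y ∈ Ioi (0 : ℝ), expIntegralE1 y + log y + expIntegralSeries y =
      expIntegralE1 x + log x + expIntegralSeries x := fun y hy =>
    isOpen_Ioi.is_const_of_deriv_eq_zero (convex_Ioi 0).isPreconnected
      (fun z hz => (hderiv z hz).differentiableAt.differentiableWithinAt)
      (fun z hz => (hderiv z hz).deriv) hy hx
  refine tendsto_nhds_unique (tendsto_const_nhds.congr' ?_)
    tendsto_expIntegralE1_add_log_add_expIntegralSeries_nhdsGT_zero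
  filter_upwards [self_mem_nhdsWithin] with y hy using (hconst y hy).symm

end Gompertz

/-- For `x > 0`, `∫₀^∞ e^{-t}/(x+t) dt = -e^x (∑_{n≥1} (-1)^n x^n/(n·n!) + log x + γ)`.
For `x = 1` the left-hand side is Gompertz's constant. -/
theorem gompertz_integral_formula (x : ℝ) (hx : 0 < x) :
    (∫ t in Set.Ioi (0 : ℝ), Real.exp (-t) / (x + t))
      = -(Real.exp x) *
          ((∑' n : ℕ, (-1 : ℝ) ^ (n + 1) * x ^ (n + 1) /
              ((n + 1 : ℝ) * (Nat.factorial (n + 1) : ℝ)))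
            + Real.log x + Real.eulerMascheroniConstant) := by
  rw [Gompertz.integral_exp_neg_div_add, ← Gompertz.expIntegralSeries]
  linear_combination exp x * Gompertz.expIntegralE1_add_log_add_expIntegralSeries hx
end

section
/- Let E(x) = Σ_{n=1}^{∞} (−1)^n x^n/(n·n!), an everywhere-convergent power series. Then on the interval (0, ∞) the functions y₁(x) = e^x and y₂(x) = e^x·(E(x) + log x) both satisfy the differential equation x·y''(x) + (1−x)·y'(x) − y(x) = 0, and y₁ and y₂ are linearly independent over ℂ. -/
/-!
Termwise differentiation gives `x E'(x) = e^{-x} - 1`, so `(E + log)' = e^{-x}/x`. Hence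
`y₂ = e^x (E + log)` satisfies `y₂' = y₂ + 1/x` and `y₂'' = y₂ + 1/x - 1/x²`, which turns
`x y₂'' + (1 - x) y₂' - y₂` into an identity. Since `(E + log)' > 0`, the ratio `y₂ / y₁ = E + log`
is not constant, so `y₁` and `y₂` are linearly independent.
-/

/-- The everywhere-convergent power series `E(x) = ∑_{n≥1} (-1)^n x^n/(n·n!)`. -/
noncomputable def Efun (x : ℝ) : ℝ :=
  ∑' n : ℕ, (-1 : ℝ) ^ (n + 1) * x ^ (n + 1) / ((n + 1 : ℝ) * (Nat.factorial (n + 1) : ℝ))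

open Real Filter Set Topology

namespace Efun

noncomputable def term (n : ℕ) (x : ℝ) : ℝ :=
  (-1 : ℝ) ^ (n + 1) * x ^ (n + 1) / ((n + 1 : ℝ) * (Nat.factorial (n + 1) : ℝ))

lemma summable_term (x : ℝ) : Summable (term · x) := by
  refine .of_norm_bounded
    ((summable_pow_div_factorial |x|).comp_injective (add_left_injective 1)) fun n ↦ ?_
  have hpos : (0 : ℝ) < (n + 1 : ℝ) * (Nat.factorial (n + 1) : ℝ) := by positivity
  rw [term, norm_div, norm_mul, norm_pow, norm_pow, norm_neg, norm_one, one_pow, one_mul,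
    Real.norm_of_nonneg hpos.le, Real.norm_eq_abs, Function.comp_apply]
  gcongr
  exact le_mul_of_one_le_left (by positivity) (by simp)

lemma hasDerivAt_term (n : ℕ) (x : ℝ) :
    HasDerivAt (term n) ((-1 : ℝ) ^ (n + 1) * x ^ n / (Nat.factorial (n + 1) : ℝ)) x := by
  refine (((hasDerivAt_pow (n + 1) x).const_mul ((-1 : ℝ) ^ (n + 1))).div_const
    ((n + 1 : ℝ) * (Nat.factorial (n + 1) : ℝ))).congr_deriv ?_
  push_cast
  field_simp

lemma norm_deriv_term_le {n : ℕ} {x R : ℝ} (hx : |x| ≤ R) :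
    ‖(-1 : ℝ) ^ (n + 1) * x ^ n / (Nat.factorial (n + 1) : ℝ)‖
      ≤ R ^ n / (Nat.factorial n : ℝ) := by
  rw [norm_div, norm_mul, norm_pow, norm_pow, norm_neg, norm_one, one_pow, one_mul,
    Real.norm_natCast, Real.norm_eq_abs]
  exact div_le_div₀ (pow_nonneg ((abs_nonneg x).trans hx) n)
    (pow_le_pow_left₀ (abs_nonneg x) hx n) (by positivity) (mod_cast Nat.factorial_le n.le_succ)

/-- Multiplied by `x`, the differentiated series is the exponential series of `-x` without its
constant term. -/
lemma hasSum_deriv_term {x : ℝ} (hx : x ≠ 0) :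
    HasSum (fun n ↦ (-1 : ℝ) ^ (n + 1) * x ^ n / (Nat.factorial (n + 1) : ℝ))
      ((exp (-x) - 1) / x) := by
  have hexp := (hasSum_nat_add_iff' 1).mpr (NormedSpace.expSeries_div_hasSum_exp (-x))
  simp only [← Real.exp_eq_exp_ℝ, Finset.range_one, Finset.sum_singleton, pow_zero,
    Nat.factorial_zero, Nat.cast_one, div_one] at hexp
  refine (hexp.div_const x).congr_fun fun n ↦ ?_
  field_simp
  ring

end Efun

lemma hasDerivAt_Efun {x : ℝ} (hx : x ≠ 0) : HasDerivAt Efun ((exp (-x) - 1) / x) x := by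
  have hx_mem : x ∈ Metric.ball (0 : ℝ) (|x| + 1) := by simp
  rw [← (Efun.hasSum_deriv_term hx).tsum_eq]
  refine hasDerivAt_tsum_of_isPreconnected (summable_pow_div_factorial (|x| + 1))
    Metric.isOpen_ball (convex_ball _ _).isPreconnected (fun n y _ ↦ Efun.hasDerivAt_term n y)
    (fun n y hy ↦ Efun.norm_deriv_term_le ?_) hx_mem (Efun.summable_term x) hx_mem
  simpa using (mem_ball_zero_iff.mp hy).le

lemma hasDerivAt_Efun_add_log {x : ℝ} (hx : 0 < x) :
    HasDerivAt (fun u ↦ Efun u + log u) (exp (-x) / x) x := by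
  refine ((hasDerivAt_Efun hx.ne').add (hasDerivAt_log hx.ne')).congr_deriv ?_
  field_simp
  ring

lemma strictMonoOn_Efun_add_log : StrictMonoOn (fun u ↦ Efun u + log u) (Ioi 0) := by
  refine strictMonoOn_of_deriv_pos (convex_Ioi 0)
    (fun x hx ↦ (hasDerivAt_Efun_add_log hx).continuousAt.continuousWithinAt) fun x hx ↦ ?_
  rw [interior_Ioi] at hx
  rw [(hasDerivAt_Efun_add_log hx).deriv]
  exact div_pos (exp_pos _) hx

lemma hasDerivAt_exp_mul_Efun_add_log {x : ℝ} (hx : 0 < x) :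
    HasDerivAt (fun u ↦ exp u * (Efun u + log u)) (exp x * (Efun x + log x) + x⁻¹) x := by
  refine ((hasDerivAt_exp x).mul (hasDerivAt_Efun_add_log hx)).congr_deriv ?_
  rw [mul_div_assoc', ← exp_add, add_neg_cancel, exp_zero, one_div]

lemma iteratedDeriv_two_eq_of_eventually_hasDerivAt {𝕜 F : Type*} [NontriviallyNormedField 𝕜]
    [NormedAddCommGroup F] [NormedSpace 𝕜 F] {f f' : 𝕜 → F} {x : 𝕜} {a : F}
    (hf : ∀ᶠ u in 𝓝 x, HasDerivAt f (f' u) u) (hf' : HasDerivAt f' a x) :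
    iteratedDeriv 2 f x = a := by
  have hderiv : deriv f =ᶠ[𝓝 x] f' := hf.mono fun _ hu ↦ hu.deriv
  rw [iteratedDeriv_succ, iteratedDeriv_one, hderiv.deriv_eq, hf'.deriv]

lemma iteratedDeriv_two_exp_mul_Efun_add_log {x : ℝ} (hx : 0 < x) :
    iteratedDeriv 2 (fun u ↦ exp u * (Efun u + log u)) x
      = exp x * (Efun x + log x) + x⁻¹ - (x ^ 2)⁻¹ := by
  refine iteratedDeriv_two_eq_of_eventually_hasDerivAt
    (eventually_gt_nhds hx |>.mono fun _ ↦ hasDerivAt_exp_mul_Efun_add_log) ?_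
  refine ((hasDerivAt_exp_mul_Efun_add_log hx).add (hasDerivAt_inv hx.ne')).congr_deriv ?_
  ring

lemma eq_zero_of_forall_mul_add_mul_mul_eq_zero {s : Set ℝ} {e g : ℝ → ℝ}
    (he : ∀ x ∈ s, e x ≠ 0) {x₁ x₂ : ℝ} (hx₁ : x₁ ∈ s) (hx₂ : x₂ ∈ s) (hg : g x₁ ≠ g x₂)
    {a b : ℂ} (h : ∀ x ∈ s, a * (e x : ℂ) + b * ((e x * g x : ℝ) : ℂ) = 0) : a = 0 ∧ b = 0 := by
  have hline : ∀ x ∈ s, a + b * g x = 0 := fun x hx ↦ by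
    have hfactor : (e x : ℂ) * (a + b * g x) = 0 := by
      linear_combination (by simpa using h x hx : a * e x + b * (e x * g x) = 0)
    exact (mul_eq_zero.mp hfactor).resolve_left (Complex.ofReal_ne_zero.mpr (he x hx))
  have hb : b = 0 := by
    have hsub : b * ((g x₁ - g x₂ : ℝ) : ℂ) = 0 := by
      push_cast
      linear_combination hline x₁ hx₁ - hline x₂ hx₂
    exact (mul_eq_zero.mp hsub).resolve_right (Complex.ofReal_ne_zero.mpr (sub_ne_zero.mpr hg))
  refine ⟨?_, hb⟩
  simpa [hb] using hline x₁ hx₁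

/-- On `(0, ∞)`, both `y₁(x) = e^x` and `y₂(x) = e^x (E(x) + log x)` satisfy
`x y'' + (1-x) y' - y = 0`, and they are linearly independent over `ℂ`. -/
theorem gompertz_ODE_solutions :
    (∀ x : ℝ, Summable (fun n : ℕ =>
        (-1 : ℝ) ^ (n + 1) * x ^ (n + 1) / ((n + 1 : ℝ) * (Nat.factorial (n + 1) : ℝ)))) ∧
    (∀ x ∈ Set.Ioi (0 : ℝ),
        x * iteratedDeriv 2 Real.exp x + (1 - x) * deriv Real.exp x - Real.exp x = 0) ∧
    (∀ x ∈ Set.Ioi (0 : ℝ),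
        x * iteratedDeriv 2 (fun u : ℝ => Real.exp u * (Efun u + Real.log u)) x
          + (1 - x) * deriv (fun u : ℝ => Real.exp u * (Efun u + Real.log u)) x
          - Real.exp x * (Efun x + Real.log x) = 0) ∧
    (∀ a b : ℂ,
      (∀ x ∈ Set.Ioi (0 : ℝ),
        a * (Real.exp x : ℂ) + b * ((Real.exp x * (Efun x + Real.log x) : ℝ) : ℂ) = 0) →
      a = 0 ∧ b = 0) := by
  refine ⟨Efun.summable_term, fun x _ ↦ ?_, fun x hx ↦ ?_, fun a b h ↦ ?_⟩
  · rw [iteratedDeriv_eq_iterate, iter_deriv_exp, Real.deriv_exp]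
    ring
  · rw [iteratedDeriv_two_exp_mul_Efun_add_log hx, (hasDerivAt_exp_mul_Efun_add_log hx).deriv]
    have hx0 : x ≠ 0 := (mem_Ioi.mp hx).ne'
    field_simp
    ring
  · exact eq_zero_of_forall_mul_add_mul_mul_eq_zero (fun x _ ↦ (exp_pos x).ne')
      (mem_Ioi.mpr one_pos) (mem_Ioi.mpr two_pos)
      (strictMonoOn_Efun_add_log (mem_Ioi.mpr one_pos) (mem_Ioi.mpr two_pos) one_lt_two).ne h
end
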